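/- For an H-equivariant comodule (M, δ) over a coalgebra C with coflat H-coaction, and φ, ψ ∈ Γ(C ↻ H), twirling is an action of the cocharacter group: δ_{φ ⋆ ψ} = (δ_φ)_ψ, where δ_φ(m) = m_{(0)}^{(0)} ⊗ m_{(0)}^{(1)} φ(m_{(1)}). -/
import Mathlib


open TensorProduct LinearMap Coalgebra

/-- A coflat Hopf coaction of a Hopf algebra `H` on a coalgebra `C`. -/
structure IsCoflatCoaction (R C H : Type) [CommRing R]
    [AddCommGroup C] [Module R C] [Coalgebra R C]
    [Ring H] [HopfAlgebra R H]
    (δ : C →ₗ[R] C ⊗[R] H) : Prop where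
  coassoc : (TensorProduct.assoc R C H H).toLinearMap ∘ₗ
      (TensorProduct.map δ (LinearMap.id : H →ₗ[R] H)) ∘ₗ δ
      = (TensorProduct.map (LinearMap.id : C →ₗ[R] C) (Coalgebra.comul (R := R))) ∘ₗ δ
  counitary : (TensorProduct.rid R C).toLinearMap ∘ₗ
      (TensorProduct.map (LinearMap.id : C →ₗ[R] C) (Coalgebra.counit (R := R))) ∘ₗ δ
      = LinearMap.id
  coflat_mul : (TensorProduct.map (LinearMap.id : (C ⊗[R] C) →ₗ[R] C ⊗[R] C)
        (LinearMap.mul' R H)) ∘ₗ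
      (TensorProduct.tensorTensorTensorComm R C H C H).toLinearMap ∘ₗ
      (TensorProduct.map δ δ) ∘ₗ Coalgebra.comul
      = (TensorProduct.map (Coalgebra.comul (R := R)) (LinearMap.id : H →ₗ[R] H)) ∘ₗ δ
  coflat_counit : (LinearMap.mul' R R) ∘ₗ
      (TensorProduct.map (Coalgebra.counit (R := R)) (Coalgebra.counit (R := R))) ∘ₗ δ
      = Coalgebra.counit

section EquivComodule

variable (R C H M : Type) [CommRing R] [AddCommGroup C] [Module R C] [Coalgebra R C]
  [Ring H] [HopfAlgebra R H] [AddCommGroup M] [Module R M]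

/-- `M` is an `H`-equivariant (right) `C`-comodule: `ρ` is a right `C`-comodule
structure, `δ` is an `H`-comodule structure, and the two are compatible:
`m₍₀₎⁽⁰⁾ ⊗ m₍₁₎⁽⁰⁾ ⊗ m⁽¹⁾ = m₍₀₎⁽⁰⁾ ⊗ m₍₁₎⁽⁰⁾ ⊗ m₍₀₎⁽¹⁾ m₍₁₎⁽¹⁾` (where `δC` is the
`H`-coaction on `C`). -/
structure IsEquivComodule (δC : C →ₗ[R] C ⊗[R] H)
    (ρ : M →ₗ[R] M ⊗[R] C) (δ : M →ₗ[R] M ⊗[R] H) : Prop where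
  ρ_coassoc : (TensorProduct.assoc R M C C).toLinearMap ∘ₗ
      (TensorProduct.map ρ (LinearMap.id : C →ₗ[R] C)) ∘ₗ ρ
      = (TensorProduct.map (LinearMap.id : M →ₗ[R] M) (Coalgebra.comul (R := R))) ∘ₗ ρ
  ρ_counit : (TensorProduct.rid R M).toLinearMap ∘ₗ
      (TensorProduct.map (LinearMap.id : M →ₗ[R] M) (Coalgebra.counit (R := R))) ∘ₗ ρ
      = LinearMap.id
  δ_coassoc : (TensorProduct.assoc R M H H).toLinearMap ∘ₗ
      (TensorProduct.map δ (LinearMap.id : H →ₗ[R] H)) ∘ₗ δ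
      = (TensorProduct.map (LinearMap.id : M →ₗ[R] M) (Coalgebra.comul (R := R))) ∘ₗ δ
  δ_counit : (TensorProduct.rid R M).toLinearMap ∘ₗ
      (TensorProduct.map (LinearMap.id : M →ₗ[R] M) (Coalgebra.counit (R := R))) ∘ₗ δ
      = LinearMap.id
  compat : (TensorProduct.map ρ (LinearMap.id : H →ₗ[R] H)) ∘ₗ δ
      = (TensorProduct.map (LinearMap.id : (M ⊗[R] C) →ₗ[R] M ⊗[R] C)
          (LinearMap.mul' R H)) ∘ₗ
        (TensorProduct.tensorTensorTensorComm R M H C H).toLinearMap ∘ₗ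
        (TensorProduct.map δ δC) ∘ₗ ρ

/-- `M` is an `H`-equivariant *left* `C`-comodule. -/
structure IsEquivComoduleLeft (δC : C →ₗ[R] C ⊗[R] H)
    (ρ : M →ₗ[R] C ⊗[R] M) (δ : M →ₗ[R] M ⊗[R] H) : Prop where
  ρ_coassoc : (TensorProduct.assoc R C C M).symm.toLinearMap ∘ₗ
      (TensorProduct.map (LinearMap.id : C →ₗ[R] C) ρ) ∘ₗ ρ
      = (TensorProduct.map (Coalgebra.comul (R := R)) (LinearMap.id : M →ₗ[R] M)) ∘ₗ ρ
  ρ_counit : (TensorProduct.lid R M).toLinearMap ∘ₗ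
      (TensorProduct.map (Coalgebra.counit (R := R)) (LinearMap.id : M →ₗ[R] M)) ∘ₗ ρ
      = LinearMap.id
  δ_coassoc : (TensorProduct.assoc R M H H).toLinearMap ∘ₗ
      (TensorProduct.map δ (LinearMap.id : H →ₗ[R] H)) ∘ₗ δ
      = (TensorProduct.map (LinearMap.id : M →ₗ[R] M) (Coalgebra.comul (R := R))) ∘ₗ δ
  δ_counit : (TensorProduct.rid R M).toLinearMap ∘ₗ
      (TensorProduct.map (LinearMap.id : M →ₗ[R] M) (Coalgebra.counit (R := R))) ∘ₗ δ
      = LinearMap.id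
  compat : (TensorProduct.map ρ (LinearMap.id : H →ₗ[R] H)) ∘ₗ δ
      = (TensorProduct.map (LinearMap.id : (C ⊗[R] M) →ₗ[R] C ⊗[R] M)
          (LinearMap.mul' R H)) ∘ₗ
        (TensorProduct.tensorTensorTensorComm R C H M H).toLinearMap ∘ₗ
        (TensorProduct.map δC δ) ∘ₗ ρ

end EquivComodule
section Cocharacters

variable (R C H : Type) [CommRing R] [AddCommGroup C] [Module R C] [Coalgebra R C]
  [Ring H] [HopfAlgebra R H]

/-- The convolution product on `Hom(C,H)`: `(φ ⋆ ψ)(c) = φ(c₍₁₎) ψ(c₍₂₎)`. -/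
noncomputable def conv (φ ψ : C →ₗ[R] H) : C →ₗ[R] H :=
  (LinearMap.mul' R H) ∘ₗ (TensorProduct.map φ ψ) ∘ₗ Coalgebra.comul

/-- The convolution unit `c ↦ ε(c) 1`. -/
noncomputable def convOne : C →ₗ[R] H :=
  (Algebra.linearMap R H) ∘ₗ Coalgebra.counit

variable (δ : C →ₗ[R] C ⊗[R] H)

/-- `c ↦ φ(c₍₁₎⁽⁰⁾) ⊗ c₍₁₎⁽¹⁾ ψ(c₍₂₎)` as a linear map `C → H ⊗ H`. -/
noncomputable def coactTerm (φ ψ : C →ₗ[R] H) : C →ₗ[R] H ⊗[R] H :=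
  (TensorProduct.map (LinearMap.id : H →ₗ[R] H) (LinearMap.mul' R H)) ∘ₗ
    (TensorProduct.assoc R H H H).toLinearMap ∘ₗ
    (TensorProduct.map (TensorProduct.map φ (LinearMap.id : H →ₗ[R] H)) ψ) ∘ₗ
    (TensorProduct.map δ (LinearMap.id : C →ₗ[R] C)) ∘ₗ Coalgebra.comul

/-- `c ↦ c₍₁₎⁽⁰⁾ ⊗ c₍₁₎⁽¹⁾ φ(c₍₂₎)` as a linear map `C → C ⊗ H`. -/
noncomputable def comodCondLHS (φ : C →ₗ[R] H) : C →ₗ[R] C ⊗[R] H :=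
  (TensorProduct.map (LinearMap.id : C →ₗ[R] C) (LinearMap.mul' R H)) ∘ₗ
    (TensorProduct.assoc R C H H).toLinearMap ∘ₗ
    (TensorProduct.map δ φ) ∘ₗ Coalgebra.comul

/-- `c ↦ c₍₂₎⁽⁰⁾ ⊗ φ(c₍₁₎) c₍₂₎⁽¹⁾` as a linear map `C → C ⊗ H`. -/
noncomputable def comodCondRHS (φ : C →ₗ[R] H) : C →ₗ[R] C ⊗[R] H :=
  (TensorProduct.map (LinearMap.id : C →ₗ[R] C) (LinearMap.mul' R H)) ∘ₗ
    (TensorProduct.assoc R C H H).toLinearMap ∘ₗ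
    (TensorProduct.map ((TensorProduct.comm R H C).toLinearMap)
      (LinearMap.id : H →ₗ[R] H)) ∘ₗ
    (TensorProduct.assoc R H C H).symm.toLinearMap ∘ₗ
    (TensorProduct.map φ δ) ∘ₗ Coalgebra.comul

/-- An `H`-equivariant cocharacter: convolution invertible, counitary, satisfying the
coaction condition and the comodule condition. -/
structure IsCocharacter (φ : C →ₗ[R] H) : Prop where
  invertible : ∃ ψ : C →ₗ[R] H, conv R C H φ ψ = convOne R C H ∧ conv R C H ψ φ = convOne R C H
  counitary : (Coalgebra.counit (R := R)) ∘ₗ φ = Coalgebra.counit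
  coaction : (Coalgebra.comul (R := R)) ∘ₗ φ = coactTerm R C H δ φ φ
  comodule : comodCondLHS R C H δ φ = comodCondRHS R C H δ φ

end Cocharacters

/-- The twirled coaction `δ_φ(m) = m₍₀₎⁽⁰⁾ ⊗ m₍₀₎⁽¹⁾ φ(m₍₁₎)`. -/
noncomputable def twirl (R C H M : Type) [CommRing R]
    [AddCommGroup C] [Module R C] [Coalgebra R C] [Ring H] [HopfAlgebra R H]
    [AddCommGroup M] [Module R M]
    (ρ : M →ₗ[R] M ⊗[R] C) (δM : M →ₗ[R] M ⊗[R] H) (φ : C →ₗ[R] H) :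
    M →ₗ[R] M ⊗[R] H :=
  (TensorProduct.map (LinearMap.id : M →ₗ[R] M) (LinearMap.mul' R H)) ∘ₗ
    (TensorProduct.assoc R M H H).toLinearMap ∘ₗ
    (TensorProduct.map δM φ) ∘ₗ ρ

/-- twirling is an action of the cocharacter group: `δ_{φ ⋆ ψ} = (δ_φ)_ψ`. -/
theorem twirl_conv (R C H M : Type) [CommRing R]
    [AddCommGroup C] [Module R C] [Coalgebra R C] [Ring H] [HopfAlgebra R H]
    [AddCommGroup M] [Module R M]
    (δC : C →ₗ[R] C ⊗[R] H) (hδC : IsCoflatCoaction R C H δC)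
    (ρ : M →ₗ[R] M ⊗[R] C) (δM : M →ₗ[R] M ⊗[R] H)
    (hM : IsEquivComodule R C H M δC ρ δM)
    (φ ψ : C →ₗ[R] H) (hφ : IsCocharacter R C H δC φ) (hψ : IsCocharacter R C H δC ψ) :
    twirl R C H M ρ δM (conv R C H φ ψ) = twirl R C H M ρ (twirl R C H M ρ δM φ) ψ := by
  set L : M ⊗[R] (C ⊗[R] C) →ₗ[R] M ⊗[R] H :=
    (TensorProduct.map (LinearMap.id : M →ₗ[R] M) (LinearMap.mul' R H)) ∘ₗ
      (TensorProduct.assoc R M H H).toLinearMap ∘ₗ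
      (TensorProduct.map δM ((LinearMap.mul' R H) ∘ₗ TensorProduct.map φ ψ)) with hL
  have hA : twirl R C H M ρ δM (conv R C H φ ψ)
      = L ∘ₗ (TensorProduct.map (LinearMap.id : M →ₗ[R] M)
          (Coalgebra.comul (R := R))) ∘ₗ ρ := by
    apply LinearMap.ext
    intro m
    simp only [twirl, conv, hL, LinearMap.comp_apply]
    generalize ρ m = t
    induction t using TensorProduct.induction_on with
    | zero => simp
    | add x y hx hy =>
        simp only [map_add, LinearEquiv.coe_coe] at *
        rw [hx, hy]
    | tmul m₀ c =>
        simp only [TensorProduct.map_tmul, LinearMap.id_apply, LinearMap.comp_apply,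
          LinearEquiv.coe_coe]
  have hB : twirl R C H M ρ (twirl R C H M ρ δM φ) ψ
      = L ∘ₗ (TensorProduct.assoc R M C C).toLinearMap ∘ₗ
          (TensorProduct.map ρ (LinearMap.id : C →ₗ[R] C)) ∘ₗ ρ := by
    apply LinearMap.ext
    intro m
    simp only [twirl, hL, LinearMap.comp_apply]
    generalize ρ m = t
    induction t using TensorProduct.induction_on with
    | zero => simp
    | add x y hx hy =>
        simp only [map_add, LinearEquiv.coe_coe] at *
        rw [hx, hy]
    | tmul x c =>
        simp only [TensorProduct.map_tmul, LinearMap.id_apply, LinearMap.comp_apply,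
          LinearEquiv.coe_coe]
        generalize ρ x = u
        induction u using TensorProduct.induction_on with
        | zero => simp
        | add a b ha hb =>
            simp only [map_add, TensorProduct.add_tmul, LinearEquiv.coe_coe] at *
            rw [ha, hb]
        | tmul x₀ c₀ =>
            simp only [TensorProduct.map_tmul, LinearMap.id_apply,
              TensorProduct.assoc_tmul, LinearMap.comp_apply, LinearMap.mul'_apply,
              LinearEquiv.coe_coe]
            generalize δM x₀ = v
            induction v using TensorProduct.induction_on with
            | zero => simp
            | add a b ha hb =>
                simp only [map_add, TensorProduct.add_tmul, LinearEquiv.coe_coe] at *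
                rw [ha, hb]
            | tmul a b => simp [mul_assoc]
  rw [hA, hB, ← hM.ρ_coassoc]
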